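/- Let m ≥ 2, τ > 0, t > 0, a > τ, and let d* = (2(m−1)τ + a·t² − √(a²t⁴ + 4(m−1)t²τ(a−τ))) / (2[(m−1)+t²]). Then 0 < d* < τ. -/
import Mathlib


/-- For m ≥ 2, τ > 0, t > 0, a > τ, the threshold
d* = (2(m−1)τ + a t² − √(a²t⁴ + 4(m−1)t²τ(a−τ)))/(2[(m−1)+t²])
satisfies 0 < d* < τ. -/
theorem swap_threshold_bounds (m τ a t : ℝ) (hm : 2 ≤ m) (hτ : 0 < τ)
    (ht : 0 < t) (ha : τ < a) :
    0 < (2 * (m - 1) * τ + a * t ^ 2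
          - Real.sqrt (a ^ 2 * t ^ 4 + 4 * (m - 1) * t ^ 2 * τ * (a - τ)))
        / (2 * ((m - 1) + t ^ 2)) ∧
      (2 * (m - 1) * τ + a * t ^ 2
          - Real.sqrt (a ^ 2 * t ^ 4 + 4 * (m - 1) * t ^ 2 * τ * (a - τ)))
        / (2 * ((m - 1) + t ^ 2)) < τ := by
  have hM : (1 : ℝ) ≤ m - 1 := by linarith
  have ht2 : 0 < t ^ 2 := by positivity
  have hMpos : (0:ℝ) < m - 1 := by linarith
  have hD : 0 < a ^ 2 * t ^ 4 + 4 * (m - 1) * t ^ 2 * τ * (a - τ) := by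
    nlinarith [sq_nonneg (a * t ^ 2),
      mul_pos (mul_pos (mul_pos hMpos ht2) hτ) (sub_pos.2 ha)]
  set s := Real.sqrt (a ^ 2 * t ^ 4 + 4 * (m - 1) * t ^ 2 * τ * (a - τ)) with hs
  have hspos : 0 < s := Real.sqrt_pos.2 hD
  have hssq : s ^ 2 = a ^ 2 * t ^ 4 + 4 * (m - 1) * t ^ 2 * τ * (a - τ) :=
    Real.sq_sqrt hD.le
  have hden : 0 < 2 * ((m - 1) + t ^ 2) := by nlinarith
  constructor
  · apply div_pos _ hden
    have hapos : 0 < a := hτ.trans ha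
    have hRpos : 0 < 2 * (m - 1) * τ + a * t ^ 2 := by positivity
    have h1 : s < 2 * (m - 1) * τ + a * t ^ 2 := by
      have h2 : s ^ 2 < (2 * (m - 1) * τ + a * t ^ 2) ^ 2 := by
        nlinarith [mul_pos (mul_pos (mul_pos hMpos hMpos) hτ) hτ,
          mul_pos (mul_pos (mul_pos hMpos ht2) hτ) hτ]
      exact lt_of_pow_lt_pow_left₀ 2 hRpos.le h2
    linarith
  · rw [div_lt_iff₀ hden]
    have h3 : t ^ 2 * (a - 2 * τ) < s := by
      rcases le_or_gt (a - 2 * τ) 0 with h | h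
      · nlinarith
      · have h4 : (t ^ 2 * (a - 2 * τ)) ^ 2 < s ^ 2 := by
          nlinarith [mul_pos (mul_pos (mul_pos hτ ht2) hMpos) (sub_pos.2 ha),
            mul_pos (mul_pos (mul_pos hτ ht2) ht2) (sub_pos.2 ha)]
        exact lt_of_pow_lt_pow_left₀ 2 hspos.le h4
    nlinarith
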